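/- arXiv:1903.05951 — 9 statements merged into one kernel-verified Lean document; each statement's English description precedes it below -/
import Mathlib

section
/- Let (D,C) be a tiling of F₂ⁿ and suppose D = B_d(0,r) for some TS-metric d on F₂ⁿ and some r > 0. Then D is a polyhedromino. -/
open Set Function

/-- A weight on a binary vector space `ι → ZMod 2`. -/
def IsWeight {ι : Type*} (ω : (ι → ZMod 2) → ℝ) : Prop :=
  (∀ x, 0 ≤ ω x) ∧ (∀ x, ω x = 0 ↔ x = 0) ∧ ∀ x y, ω (x + y) ≤ ω x + ω y

/-- A function respects the support of vectors. -/
def RespectsSupport {ι : Type*} (ω : (ι → ZMod 2) → ℝ) : Prop :=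
  ∀ x y : ι → ZMod 2, Function.support x ⊆ Function.support y → ω x ≤ ω y

/-- A TS-metric: a (translation-invariant) metric determined by a weight
that respects support, i.e. `d x y = ω (x + y)` (note `-y = y` in char 2). -/
def IsTSMetric {ι : Type*} (d : (ι → ZMod 2) → (ι → ZMod 2) → ℝ) : Prop :=
  ∃ ω, IsWeight ω ∧ RespectsSupport ω ∧ ∀ x y, d x y = ω (x + y)

/-- The ball `B_d(x, r)`. -/
def tsBall {ι : Type*} (d : (ι → ZMod 2) → (ι → ZMod 2) → ℝ) (x : ι → ZMod 2) (r : ℝ) :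
    Set (ι → ZMod 2) := {y | d x y ≤ r}

/-- `(D, C)` is a tiling: the translates `c + D`, `c ∈ C`, are pairwise disjoint
and cover the whole space. -/
def IsTiling {ι : Type*} (D C : Set (ι → ZMod 2)) : Prop :=
  (⋃ c ∈ C, (c + ·) '' D) = Set.univ ∧
  C.Pairwise fun c c' => Disjoint ((c + ·) '' D) ((c' + ·) '' D)

/-- `C` is a `(d, r)`-perfect code: the balls of radius `r` centered at codewords
are pairwise disjoint and cover the whole space. -/
def IsPerfectCode {ι : Type*} (d : (ι → ZMod 2) → (ι → ZMod 2) → ℝ) (r : ℝ)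
    (C : Set (ι → ZMod 2)) : Prop :=
  (⋃ c ∈ C, tsBall d c r) = Set.univ ∧
  C.Pairwise fun c c' => Disjoint (tsBall d c r) (tsBall d c' r)

/-- A polyhedromino: any two points of `D` are joined by a geodesic path
(w.r.t. the Hamming distance) lying inside `D`. -/
def IsPolyhedromino {ι : Type*} [Fintype ι] (D : Set (ι → ZMod 2)) : Prop :=
  ∀ x ∈ D, ∀ y ∈ D, ∃ γ : ℕ → (ι → ZMod 2),
    γ 0 = x ∧ γ (hammingDist x y) = y ∧
    (∀ i ≤ hammingDist x y, γ i ∈ D) ∧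
    ∀ i < hammingDist x y, hammingDist (γ i) (γ (i + 1)) = 1

/-- A poly-tiling: a tiling whose tile is a polyhedromino. -/
def IsPolyTiling {ι : Type*} [Fintype ι] (D C : Set (ι → ZMod 2)) : Prop :=
  IsTiling D C ∧ IsPolyhedromino D

/-- The vector `e_i` with support `{i}`. -/
def unitVec {ι : Type*} [DecidableEq ι] (i : ι) : ι → ZMod 2 := Pi.single i 1

/-- The `F`-combinatorial weight: the minimal number of members of `F` needed
to cover the support of `x`. -/
noncomputable def combWeight {ι : Type*} [DecidableEq ι] (F : Finset (Finset ι))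
    (x : ι → ZMod 2) : ℕ :=
  sInf {k | ∃ A : Finset (Finset ι), A ⊆ F ∧ A.card = k ∧ Function.support x ⊆ ↑(A.sup id)}

/-- The axioms of a metric. -/
def IsMetric {α : Type*} (d : α → α → ℝ) : Prop :=
  (∀ x y, d x y = 0 ↔ x = y) ∧ (∀ x y, d x y = d y x) ∧ ∀ x y z, d x z ≤ d x y + d y z

/-- The max-metric on the product (concatenation) space, identified with
functions on `Fin n ⊕ Fin m`. -/
def dmax {n m : ℕ} (d₁ : (Fin n → ZMod 2) → (Fin n → ZMod 2) → ℝ)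
    (d₂ : (Fin m → ZMod 2) → (Fin m → ZMod 2) → ℝ)
    (w w' : Fin n ⊕ Fin m → ZMod 2) : ℝ :=
  max (d₁ (fun i => w (Sum.inl i)) (fun i => w' (Sum.inl i)))
      (d₂ (fun j => w (Sum.inr j)) (fun j => w' (Sum.inr j)))


theorem poly_of_closed {n : ℕ} (D : Set (Fin n → ZMod 2))
    (h : ∀ y ∈ D, ∀ z : Fin n → ZMod 2, Function.support z ⊆ Function.support y → z ∈ D) :
    ∀ x ∈ D, ∀ y ∈ D, ∃ γ : ℕ → (Fin n → ZMod 2),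
    γ 0 = x ∧ γ (hammingDist x y) = y ∧
    (∀ i ≤ hammingDist x y, γ i ∈ D) ∧
    ∀ i < hammingDist x y, hammingDist (γ i) (γ (i + 1)) = 1 := by
  classical
  intro x hx y hy
  have zcase : ∀ a : ZMod 2, a = 0 ∨ a = 1 := by decide
  set A : Finset (Fin n) := Finset.univ.filter (fun i => x i ≠ y i ∧ y i = 0) with hA
  set B : Finset (Fin n) := Finset.univ.filter (fun i => x i ≠ y i ∧ y i ≠ 0) with hB
  set L : List (Fin n) := A.toList ++ B.toList with hLdef
  have hmemA : ∀ i, i ∈ A ↔ x i ≠ y i ∧ y i = 0 := by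
    intro i; simp [hA]
  have hmemB : ∀ i, i ∈ B ↔ x i ≠ y i ∧ y i ≠ 0 := by
    intro i; simp [hB]
  have hmemL : ∀ i, i ∈ L ↔ x i ≠ y i := by
    intro i
    simp only [hLdef, List.mem_append, Finset.mem_toList, hmemA, hmemB]
    constructor
    · rintro (⟨h1, _⟩ | ⟨h1, _⟩) <;> exact h1
    · intro h1
      rcases zcase (y i) with h2 | h2
      · exact Or.inl ⟨h1, h2⟩
      · exact Or.inr ⟨h1, by rw [h2]; exact one_ne_zero⟩
  have hnodup : L.Nodup := by
    refine List.Nodup.append A.nodup_toList B.nodup_toList ?_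
    intro i hiA hiB
    rw [Finset.mem_toList, hmemA] at hiA
    rw [Finset.mem_toList, hmemB] at hiB
    exact hiB.2 hiA.2
  have hlen : L.length = hammingDist x y := by
    rw [hLdef, List.length_append, Finset.length_toList, Finset.length_toList]
    rw [hammingDist]
    rw [← Finset.card_union_of_disjoint]
    · congr 1
      ext i
      simp only [Finset.mem_union, hmemA, hmemB, Finset.mem_filter, Finset.mem_univ, true_and]
      constructor
      · rintro (⟨h1, _⟩ | ⟨h1, _⟩) <;> exact h1
      · intro h1
        rcases zcase (y i) with h2 | h2
        · exact Or.inl ⟨h1, h2⟩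
        · exact Or.inr ⟨h1, by rw [h2]; exact one_ne_zero⟩
    · rw [Finset.disjoint_left]
      intro i hiA hiB
      exact ((hmemB i).1 hiB).2 ((hmemA i).1 hiA).2
  set γ : ℕ → (Fin n → ZMod 2) := fun k i => if i ∈ L.take k then y i else x i with hγ
  refine ⟨γ, ?_, ?_, ?_, ?_⟩
  · funext i; simp [hγ]
  · funext i
    simp only [hγ, ← hlen, List.take_length]
    by_cases hi : i ∈ L
    · simp [hi]
    · simp only [hi, if_false]
      by_contra hne
      exact hi ((hmemL i).2 hne)
  · intro k hk
    by_cases hkA : k ≤ A.card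
    · -- support γ k ⊆ support x
      refine h x hx _ ?_
      intro i hi
      simp only [hγ, Function.mem_support, ne_eq] at hi ⊢
      by_cases hmem : i ∈ L.take k
      · exfalso
        have : i ∈ A.toList := by
          have heq : L.take k = A.toList.take k := by
            rw [hLdef, List.take_append_of_le_length (by rwa [Finset.length_toList])]
          rw [heq] at hmem
          exact List.mem_of_mem_take hmem
        rw [Finset.mem_toList, hmemA] at this
        rw [if_pos hmem] at hi
        exact hi this.2
      · rw [if_neg hmem] at hi; exact hi
    · -- support γ k ⊆ support y
      push_neg at hkA
      refine h y hy _ ?_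
      intro i hi
      simp only [hγ, Function.mem_support, ne_eq] at hi ⊢
      by_cases hmem : i ∈ L.take k
      · rwa [if_pos hmem] at hi
      · rw [if_neg hmem] at hi
        have hiA : i ∉ A := by
          intro hiA
          apply hmem
          have heq : L.take k = A.toList ++ B.toList.take (k - A.toList.length) := by
            rw [hLdef, List.take_append,
              List.take_of_length_le (by rw [Finset.length_toList]; omega)]
          rw [heq, List.mem_append]
          exact Or.inl (Finset.mem_toList.2 hiA)
        by_contra hyi
        exact hiA ((hmemA i).2 ⟨by rw [hyi]; exact hi, hyi⟩)
  · intro k hk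
    rw [← hlen] at hk
    set ℓ : Fin n := L.get ⟨k, hk⟩ with hℓ
    have htake : L.take (k + 1) = L.take k ++ [ℓ] := by
      rw [← List.concat_eq_append]
      exact (List.take_concat_get hk).symm
    have hℓnot : ℓ ∉ L.take k := by
      have hnd : (L.take (k + 1)).Nodup := (List.take_sublist _ _).nodup hnodup
      rw [htake] at hnd
      have := List.disjoint_of_nodup_append hnd
      intro hmem
      exact this hmem (List.mem_singleton_self ℓ)
    have hℓL : ℓ ∈ L := List.get_mem L _
    have hℓxy : x ℓ ≠ y ℓ := (hmemL ℓ).1 hℓL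
    rw [hammingDist]
    have : (Finset.univ.filter fun i => γ k i ≠ γ (k+1) i) = {ℓ} := by
      ext i
      simp only [Finset.mem_filter, Finset.mem_univ, true_and, Finset.mem_singleton, hγ, htake,
        List.mem_append, List.mem_singleton, ne_eq]
      constructor
      · intro hne
        by_contra hiℓ
        apply hne
        by_cases hmem : i ∈ L.take k
        · simp [hmem]
        · simp [hmem, hiℓ]
      · intro hiℓ
        subst hiℓ
        simpa [hℓnot] using hℓxy
    rw [this, Finset.card_singleton]

/-- If `(D, C)` is a tiling of `F₂ⁿ` and `D = B_d(0, r)` for some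
TS-metric `d` and `r > 0`, then `D` is a polyhedromino. -/
theorem stmt_0 {n : ℕ} (D C : Set (Fin n → ZMod 2))
    (d : (Fin n → ZMod 2) → (Fin n → ZMod 2) → ℝ) (r : ℝ)
    (hd : IsTSMetric d) (hr : 0 < r) (ht : IsTiling D C) (hD : D = tsBall d 0 r) :
    IsPolyhedromino D := by
  obtain ⟨ω, ⟨hpos, hzero, htri⟩, hresp, hdw⟩ := hd
  have hclosed : ∀ y ∈ D, ∀ z : Fin n → ZMod 2,
      Function.support z ⊆ Function.support y → z ∈ D := by
    intro y hy z hsub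
    rw [hD] at hy ⊢
    simp only [tsBall, Set.mem_setOf_eq, hdw, zero_add] at hy ⊢
    exact le_trans (hresp z y hsub) hy
  exact poly_of_closed D hclosed
end

section
/- Let d be a TS-metric on F₂ⁿ, r > 0, and B = B_d(0,r). If B has exactly 2 elements, then B = {0, e_i} for some index i ∈ Fin n. -/
/-! Since the weight respects support, the ball around `0` is closed under shrinking supports.
So it contains `0`, and together with its nonzero element `x` it contains `e_i` for any
`i ∈ supp x`; as `e_i ≠ 0`, this forces `x = e_i`. -/

open Set Function

theorem Set.exists_ne_eq_pair_of_ncard_eq_two {α : Type*} {s : Set α} {a : α}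
    (hs : s.ncard = 2) (ha : a ∈ s) : ∃ b, b ≠ a ∧ s = {a, b} := by
  obtain ⟨x, y, hxy, rfl⟩ := Set.ncard_eq_two.mp hs
  rcases ha with rfl | rfl
  · exact ⟨y, hxy.symm, rfl⟩
  · exact ⟨x, hxy, Set.pair_comm x a⟩

theorem support_unitVec {ι : Type*} [DecidableEq ι] (i : ι) : support (unitVec i) = {i} :=
  Pi.support_single_of_ne one_ne_zero

theorem unitVec_ne_zero {ι : Type*} [DecidableEq ι] (i : ι) : unitVec i ≠ 0 :=
  Pi.single_ne_zero_iff.mpr one_ne_zero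

theorem IsTSMetric.mem_tsBall_zero_of_support_subset {ι : Type*}
    {d : (ι → ZMod 2) → (ι → ZMod 2) → ℝ} (hd : IsTSMetric d) {r : ℝ} {x y : ι → ZMod 2}
    (hxy : support x ⊆ support y) (hy : y ∈ tsBall d 0 r) : x ∈ tsBall d 0 r := by
  obtain ⟨ω, -, hω, hdω⟩ := hd
  simp only [tsBall, mem_ofPred_eq, hdω, zero_add] at hy ⊢
  exact (hω x y hxy).trans hy

theorem IsTSMetric.zero_mem_tsBall_of_nonempty {ι : Type*}
    {d : (ι → ZMod 2) → (ι → ZMod 2) → ℝ} (hd : IsTSMetric d) {r : ℝ}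
    (hB : (tsBall d 0 r).Nonempty) : 0 ∈ tsBall d 0 r := by
  obtain ⟨y, hy⟩ := hB
  exact hd.mem_tsBall_zero_of_support_subset (by simp) hy

theorem stmt_3_general {n : ℕ} (d : (Fin n → ZMod 2) → (Fin n → ZMod 2) → ℝ)
    (hd : IsTSMetric d) (r : ℝ)
    (h : (tsBall d 0 r).ncard = 2) :
    ∃ i : Fin n, tsBall d 0 r = {0, unitVec i} := by
  have h0 : 0 ∈ tsBall d 0 r :=
    hd.zero_mem_tsBall_of_nonempty (Set.nonempty_of_ncard_ne_zero (by omega))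
  obtain ⟨x, hx0, hB⟩ := Set.exists_ne_eq_pair_of_ncard_eq_two h h0
  obtain ⟨i, hi⟩ : ∃ i, x i ≠ 0 := Function.ne_iff.mp hx0
  have hei : unitVec i ∈ tsBall d 0 r :=
    hd.mem_tsBall_zero_of_support_subset (by simpa [support_unitVec] using hi)
      (hB ▸ Set.mem_insert_of_mem 0 (Set.mem_singleton x))
  rw [hB] at hei ⊢
  rcases hei with he0 | hex
  · exact absurd he0 (unitVec_ne_zero i)
  · exact ⟨i, by rw [hex]⟩

/-- a TS-ball centered at `0` with exactly 2 elements is `{0, e_i}`. -/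
theorem stmt_3 {n : ℕ} (d : (Fin n → ZMod 2) → (Fin n → ZMod 2) → ℝ)
    (hd : IsTSMetric d) (r : ℝ) (hr : 0 < r)
    (h : (tsBall d 0 r).ncard = 2) :
    ∃ i : Fin n, tsBall d 0 r = {0, unitVec i} :=
  stmt_3_general d hd r h
end

section
/- Let d be a TS-metric on F₂ⁿ, r > 0, and B = B_d(0,r). If B has exactly 4 elements, then either B = {0, e_i, e_j, e_k} for three distinct indices i, j, k ∈ Fin n, or B = {0, e_i, e_j, e_i + e_j} for two distinct indices i ≠ j. -/
open Set Function

/-! A TS-ball around `0` is closed under shrinking supports, since the weight respects support.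
If it contains a vector whose support has two points `i ≠ j`, it contains the four vectors
supported in `{i, j}`, and having four elements it is exactly those. Otherwise every nonzero
member is a unit vector, and the three nonzero members give `e_i, e_j, e_k`. -/

section

variable {ι : Type*}

def IsSupportDownClosed (S : Set (ι → ZMod 2)) : Prop :=
  ∀ x ∈ S, ∀ y, support y ⊆ support x → y ∈ S

lemma IsTSMetric.isSupportDownClosed_tsBall {d : (ι → ZMod 2) → (ι → ZMod 2) → ℝ}
    (hd : IsTSMetric d) (r : ℝ) : IsSupportDownClosed (tsBall d 0 r) := by
  obtain ⟨ω, -, hω, hdω⟩ := hd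
  intro x hx y hyx
  simp only [tsBall, mem_ofPred_eq, hdω, zero_add] at hx ⊢
  exact (hω y x hyx).trans hx

lemma IsSupportDownClosed.zero_mem {S : Set (ι → ZMod 2)} (hS : IsSupportDownClosed S)
    (hne : S.Nonempty) : 0 ∈ S :=
  hne.elim fun x hx => hS x hx 0 (by simp)

variable [DecidableEq ι]

lemma unitVec_apply_self (i : ι) : unitVec i i = 1 := Pi.single_eq_same i 1

lemma unitVec_apply_of_ne {i j : ι} (h : j ≠ i) : unitVec i j = 0 := Pi.single_eq_of_ne h 1

lemma support_unitVec_subset (i : ι) : support (unitVec i) ⊆ {i} := Pi.support_single_subset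

lemma eq_unitVec_of_support_subsingleton {x : ι → ZMod 2} (hx : x ≠ 0)
    (hs : (support x).Subsingleton) : ∃ i, x = unitVec i := by
  obtain ⟨i, hi⟩ := Function.ne_iff.1 hx
  refine ⟨i, funext fun j => ?_⟩
  by_cases hji : j = i
  · subst hji
    exact (unitVec_apply_self j).symm ▸ Fin.eq_one_of_ne_zero _ hi
  · rw [unitVec_apply_of_ne hji]
    by_contra hj
    exact hji (hs hj hi)

lemma ncard_zero_unitVec_unitVec_add {i j : ι} (hij : i ≠ j) :
    ({0, unitVec i, unitVec j, unitVec i + unitVec j} : Set (ι → ZMod 2)).ncard = 4 := by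
  have hii := unitVec_apply_self i
  have hjj := unitVec_apply_self j
  have hji : unitVec j i = 0 := unitVec_apply_of_ne hij
  have hij : unitVec i j = 0 := unitVec_apply_of_ne hij.symm
  rw [ncard_insert_of_notMem, ncard_insert_of_notMem, ncard_pair]
  · intro h; simpa [hii, hji] using congrFun h i
  · simp only [mem_insert_iff, mem_singleton_iff, not_or]
    exact ⟨fun h => by simpa [hjj, hij] using congrFun h j,
      fun h => by simpa [hjj, hij] using congrFun h j⟩
  · simp only [mem_insert_iff, mem_singleton_iff, not_or]
    exact ⟨fun h => by simpa [hii] using congrFun h i,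
      fun h => by simpa [hjj, hij] using congrFun h j,
      fun h => by simpa [hii, hji] using congrFun h i⟩

namespace IsSupportDownClosed

variable {S : Set (ι → ZMod 2)}

lemma eq_of_apply_ne_zero (hS : IsSupportDownClosed S) (h4 : S.ncard = 4) {x : ι → ZMod 2}
    (hx : x ∈ S) {i j : ι} (hij : i ≠ j) (hi : x i ≠ 0) (hj : x j ≠ 0) :
    S = {0, unitVec i, unitVec j, unitVec i + unitVec j} := by
  have hsub : ({0, unitVec i, unitVec j, unitVec i + unitVec j} : Set (ι → ZMod 2)) ⊆ S := by
    rintro y (rfl | rfl | rfl | rfl)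
    · exact hS x hx 0 (by simp)
    · exact hS x hx _ ((support_unitVec_subset i).trans (by simpa using hi))
    · exact hS x hx _ ((support_unitVec_subset j).trans (by simpa using hj))
    · refine hS x hx _ ((support_add _ _).trans ?_)
      exact union_subset_union (support_unitVec_subset i) (support_unitVec_subset j) |>.trans
        (union_subset (by simpa using hi) (by simpa using hj))
  have hfin : S.Finite := finite_of_ncard_ne_zero (by rw [h4]; norm_num)
  refine (eq_of_subset_of_ncard_le hsub ?_ hfin).symm
  rw [h4, ncard_zero_unitVec_unitVec_add hij]

lemma eq_of_forall_support_subsingleton (hS : IsSupportDownClosed S) (h4 : S.ncard = 4)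
    (hsing : ∀ x ∈ S, (support x).Subsingleton) :
    ∃ i j k : ι, i ≠ j ∧ i ≠ k ∧ j ≠ k ∧ S = {0, unitVec i, unitVec j, unitVec k} := by
  have h0 : 0 ∈ S := hS.zero_mem (nonempty_of_ncard_ne_zero (by rw [h4]; norm_num))
  have hunit : ∀ x ∈ S \ {0}, ∃ i, x = unitVec i := fun x hx =>
    eq_unitVec_of_support_subsingleton hx.2 (hsing x hx.1)
  obtain ⟨a, b, c, hab, hac, hbc, habc⟩ :=
    ncard_eq_three.1 (by rw [ncard_sdiff_singleton_of_mem h0, h4] : (S \ {0}).ncard = 3)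
  obtain ⟨i, rfl⟩ := hunit a (by simp [habc])
  obtain ⟨j, rfl⟩ := hunit b (by simp [habc])
  obtain ⟨k, rfl⟩ := hunit c (by simp [habc])
  refine ⟨i, j, k, ne_of_apply_ne _ hab, ne_of_apply_ne _ hac, ne_of_apply_ne _ hbc, ?_⟩
  rw [← habc, insert_sdiff_singleton, insert_eq_of_mem h0]

theorem ncard_eq_four (hS : IsSupportDownClosed S) (h4 : S.ncard = 4) :
    (∃ i j k : ι, i ≠ j ∧ i ≠ k ∧ j ≠ k ∧ S = {0, unitVec i, unitVec j, unitVec k}) ∨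
    (∃ i j : ι, i ≠ j ∧ S = {0, unitVec i, unitVec j, unitVec i + unitVec j}) := by
  by_cases hsing : ∀ x ∈ S, (support x).Subsingleton
  · exact Or.inl (hS.eq_of_forall_support_subsingleton h4 hsing)
  · push Not at hsing
    obtain ⟨x, hx, i, hi, j, hj, hij⟩ := hsing
    exact Or.inr ⟨i, j, hij, hS.eq_of_apply_ne_zero h4 hx hij hi hj⟩

end IsSupportDownClosed

end

theorem stmt_4_general {n : ℕ} (d : (Fin n → ZMod 2) → (Fin n → ZMod 2) → ℝ)
    (hd : IsTSMetric d) (r : ℝ)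
    (h : (tsBall d 0 r).ncard = 4) :
    (∃ i j k : Fin n, i ≠ j ∧ i ≠ k ∧ j ≠ k ∧
      tsBall d 0 r = {0, unitVec i, unitVec j, unitVec k}) ∨
    (∃ i j : Fin n, i ≠ j ∧
      tsBall d 0 r = {0, unitVec i, unitVec j, unitVec i + unitVec j}) :=
  (hd.isSupportDownClosed_tsBall r).ncard_eq_four h

/-- a TS-ball centered at `0` with exactly 4 elements is either
`{0, e_i, e_j, e_k}` for distinct `i, j, k`, or `{0, e_i, e_j, e_i + e_j}` for `i ≠ j`. -/
theorem stmt_4 {n : ℕ} (d : (Fin n → ZMod 2) → (Fin n → ZMod 2) → ℝ)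
    (hd : IsTSMetric d) (r : ℝ) (hr : 0 < r)
    (h : (tsBall d 0 r).ncard = 4) :
    (∃ i j k : Fin n, i ≠ j ∧ i ≠ k ∧ j ≠ k ∧
      tsBall d 0 r = {0, unitVec i, unitVec j, unitVec k}) ∨
    (∃ i j : Fin n, i ≠ j ∧
      tsBall d 0 r = {0, unitVec i, unitVec j, unitVec i + unitVec j}) :=
  stmt_4_general d hd r h
end

section
/- Let i, j, k be three pairwise distinct indices in Fin n. Then each of the three sets {0, e_i}, {0, e_i, e_j, e_i + e_j}, and {0, e_i, e_j, e_k} equals B_d(0,r) for some TS-metric d on F₂ⁿ and some r > 0. -/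
open Set Function

lemma zmod2_one_of_ne (a : ZMod 2) (h : a ≠ 0) : a = 1 := by
  fin_cases a
  · exact absurd rfl h
  · rfl

lemma zmod2_eq_of_supp {ι : Type*} {x y : ι → ZMod 2}
    (h : Function.support x = Function.support y) : x = y := by
  funext t
  by_cases ht : x t = 0
  · have hy : y t = 0 := by
      by_contra hyn
      have : t ∈ Function.support y := hyn
      rw [← h] at this
      exact this ht
    rw [ht, hy]
  · have hx' : t ∈ Function.support x := ht
    rw [h] at hx'
    rw [zmod2_one_of_ne _ ht, zmod2_one_of_ne _ hx']

lemma supp_unitVec {ι : Type*} [DecidableEq ι] (i : ι) :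
    Function.support (unitVec i) = {i} := by
  classical
  ext t
  simp [unitVec, Pi.single_apply]

/-- Main construction: any support-downward-closed set containing 0 is a ball. -/
lemma ball_of_downward {ι : Type*} (S : Set (ι → ZMod 2)) (h0 : (0 : ι → ZMod 2) ∈ S)
    (hdc : ∀ x y : ι → ZMod 2, Function.support x ⊆ Function.support y → y ∈ S → x ∈ S) :
    ∃ (d : (ι → ZMod 2) → (ι → ZMod 2) → ℝ) (r : ℝ),
      IsTSMetric d ∧ 0 < r ∧ tsBall d 0 r = S := by
  classical
  set ω : (ι → ZMod 2) → ℝ := fun x => if x = 0 then 0 else if x ∈ S then 1 else 2 with hω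
  have hω01 : ∀ x, ω x = 0 ∨ ω x = 1 ∨ ω x = 2 := by
    intro x; simp only [hω]; split_ifs <;> simp
  have hpos : ∀ x, 0 ≤ ω x := by
    intro x; rcases hω01 x with h | h | h <;> rw [h] <;> norm_num
  have hne : ∀ x, x ≠ 0 → 1 ≤ ω x := by
    intro x hx; simp only [hω]; split_ifs with h1 h2 <;> first | exact absurd h1 hx | norm_num
  have hle2 : ∀ x, ω x ≤ 2 := by
    intro x; rcases hω01 x with h | h | h <;> rw [h] <;> norm_num
  have hzero : ω 0 = 0 := by simp [hω]
  refine ⟨fun x y => ω (x + y), 1, ⟨ω, ⟨hpos, ?_, ?_⟩, ?_, fun _ _ => rfl⟩, one_pos, ?_⟩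
  · intro x
    constructor
    · intro h
      by_contra hx
      have := hne x hx
      linarith
    · intro h; rw [h, hzero]
  · intro x y
    by_cases hx : x = 0
    · rw [hx, zero_add, hzero, zero_add]
    by_cases hy : y = 0
    · rw [hy, add_zero, hzero, add_zero]
    have := hne x hx
    have := hne y hy
    have := hle2 (x + y)
    linarith
  · intro x y hsub
    by_cases hx : x = 0
    · rw [hx, hzero]; exact hpos y
    have hy : y ≠ 0 := by
      rintro rfl
      obtain ⟨t, ht⟩ := Function.ne_iff.mp hx
      exact hx (funext fun s => by
        by_cases hs : x s = 0
        · exact hs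
        · exact absurd (hsub hs) (by simp))
    by_cases hxS : x ∈ S
    · have h1 : ω x = 1 := by simp [hω, hx, hxS]
      rw [h1]; exact hne y hy
    · have hyS : y ∉ S := fun hyS => hxS (hdc x y hsub hyS)
      have : ω x = 2 := by simp [hω, hx, hxS]
      have : ω y = 2 := by simp [hω, hy, hyS]
      simp_all
  · ext z
    simp only [tsBall, Set.mem_setOf_eq, zero_add]
    constructor
    · intro hz
      by_contra hzS
      have hz0 : z ≠ 0 := fun h => hzS (h ▸ h0)
      have : ω z = 2 := by simp [hω, hz0, hzS]
      rw [this] at hz; linarith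
    · intro hz
      by_cases hz0 : z = 0
      · simp [hω, hz0]
      · have : ω z = 1 := by simp [hω, hz0, hz]
        rw [this]

lemma mem_pair_iff_supp {ι : Type*} [DecidableEq ι] (i : ι) (x : ι → ZMod 2) :
    x ∈ ({0, unitVec i} : Set (ι → ZMod 2)) ↔ Function.support x ⊆ {i} := by
  constructor
  · rintro (rfl | rfl)
    · simp
    · rw [supp_unitVec]
  · intro h
    by_cases hx : x = 0
    · exact Or.inl hx
    · right
      apply zmod2_eq_of_supp
      rw [supp_unitVec]
      apply Set.Subset.antisymm h
      obtain ⟨t, ht⟩ := Function.ne_iff.mp hx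
      have : t ∈ ({i} : Set ι) := h ht
      rintro s rfl
      simp only [Set.mem_singleton_iff] at this
      subst this
      exact ht


lemma supp_unitVec_add {ι : Type*} [DecidableEq ι] {i j : ι} (hij : i ≠ j) :
    Function.support (unitVec i + unitVec j) = {i, j} := by
  classical
  ext t
  simp only [Function.mem_support, Pi.add_apply, unitVec, Pi.single_apply,
    Set.mem_insert_iff, Set.mem_singleton_iff]
  by_cases hti : t = i <;> by_cases htj : t = j <;> simp_all

lemma mem_quad_iff_supp {ι : Type*} [DecidableEq ι] {i j : ι} (hij : i ≠ j)
    (x : ι → ZMod 2) :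
    x ∈ ({0, unitVec i, unitVec j, unitVec i + unitVec j} : Set (ι → ZMod 2)) ↔
      Function.support x ⊆ {i, j} := by
  classical
  constructor
  · rintro (rfl | rfl | rfl | rfl)
    · simp
    · rw [supp_unitVec]; exact fun t ht => Or.inl ht
    · rw [supp_unitVec]; exact fun t ht => Or.inr ht
    · rw [supp_unitVec_add hij]
  · intro h
    have hout : ∀ t, t ≠ i → t ≠ j → x t = 0 := by
      intro t hti htj
      by_contra hxt
      rcases h hxt with h' | h' <;> simp_all
    by_cases hxi : x i = 0 <;> by_cases hxj : x j = 0
    · left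
      funext t
      by_cases hti : t = i
      · subst hti; simpa using hxi
      by_cases htj : t = j
      · subst htj; simpa using hxj
      simpa using hout t hti htj
    · right; right; left
      funext t
      by_cases hti : t = i
      · subst hti; simp [unitVec, Pi.single_apply, hij, hxi]
      by_cases htj : t = j
      · subst htj; simp [unitVec, Pi.single_apply, zmod2_one_of_ne _ hxj]
      simp [unitVec, Pi.single_apply, hti, htj, hout t hti htj]
    · right; left
      funext t
      by_cases hti : t = i
      · subst hti; simp [unitVec, Pi.single_apply, zmod2_one_of_ne _ hxi]
      by_cases htj : t = j
      · subst htj; simp [unitVec, Pi.single_apply, Ne.symm hij, hxj]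
      simp [unitVec, Pi.single_apply, hti, htj, hout t hti htj]
    · right; right; right
      funext t
      by_cases hti : t = i
      · subst hti
        simp [unitVec, Pi.single_apply, hij, zmod2_one_of_ne _ hxi]
      by_cases htj : t = j
      · subst htj
        simp [unitVec, Pi.single_apply, Ne.symm hij, zmod2_one_of_ne _ hxj]
      simp [unitVec, Pi.single_apply, hti, htj, hout t hti htj]

lemma mem_tri_iff_supp {ι : Type*} [DecidableEq ι] (i j k : ι) (x : ι → ZMod 2) :
    x ∈ ({0, unitVec i, unitVec j, unitVec k} : Set (ι → ZMod 2)) ↔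
      Function.support x ⊆ {i} ∨ Function.support x ⊆ {j} ∨ Function.support x ⊆ {k} := by
  constructor
  · rintro (rfl | rfl | rfl | rfl)
    · left; simp
    · left; rw [supp_unitVec]
    · right; left; rw [supp_unitVec]
    · right; right; rw [supp_unitVec]
  · rintro (h | h | h)
    · rcases (mem_pair_iff_supp i x).mpr h with h' | h'
      · exact Or.inl h'
      · exact Or.inr (Or.inl h')
    · rcases (mem_pair_iff_supp j x).mpr h with h' | h'
      · exact Or.inl h'
      · exact Or.inr (Or.inr (Or.inl h'))
    · rcases (mem_pair_iff_supp k x).mpr h with h' | h'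
      · exact Or.inl h'
      · exact Or.inr (Or.inr (Or.inr h'))

/-- each of `{0, e_i}`, `{0, e_i, e_j, e_i + e_j}` and `{0, e_i, e_j, e_k}`
is a ball `B_d(0, r)` for some TS-metric `d` and some `r > 0`. -/
theorem stmt_5 {n : ℕ} (i j k : Fin n) (hij : i ≠ j) (hik : i ≠ k) (hjk : j ≠ k) :
    (∃ (d : (Fin n → ZMod 2) → (Fin n → ZMod 2) → ℝ) (r : ℝ),
      IsTSMetric d ∧ 0 < r ∧ tsBall d 0 r = {0, unitVec i}) ∧
    (∃ (d : (Fin n → ZMod 2) → (Fin n → ZMod 2) → ℝ) (r : ℝ),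
      IsTSMetric d ∧ 0 < r ∧
      tsBall d 0 r = {0, unitVec i, unitVec j, unitVec i + unitVec j}) ∧
    (∃ (d : (Fin n → ZMod 2) → (Fin n → ZMod 2) → ℝ) (r : ℝ),
      IsTSMetric d ∧ 0 < r ∧ tsBall d 0 r = {0, unitVec i, unitVec j, unitVec k}) := by
    classical
  refine ⟨?_, ?_, ?_⟩
  · apply ball_of_downward
    · exact Or.inl rfl
    · intro x y hsub hy
      rw [mem_pair_iff_supp] at hy ⊢
      exact hsub.trans hy
  · apply ball_of_downward
    · exact Or.inl rfl
    · intro x y hsub hy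
      rw [mem_quad_iff_supp hij] at hy ⊢
      exact hsub.trans hy
  · apply ball_of_downward
    · exact Or.inl rfl
    · intro x y hsub hy
      rw [mem_tri_iff_supp] at hy ⊢
      rcases hy with h | h | h
      exacts [Or.inl (hsub.trans h), Or.inr (Or.inl (hsub.trans h)),
        Or.inr (Or.inr (hsub.trans h))]
end

section
/- Let j ≠ k in Fin n, let x = e_j + e_k, and let F = {{i} : i ∈ Fin n} ∪ {{j,k}}. Then the F-combinatorial metric d_F is a TS-metric on F₂ⁿ with B_{d_F}(0,1) = D_n(x) := {0, x} ∪ {e_i : i ∈ Fin n}. Consequently, if (D_n(x), C) is a tiling of F₂ⁿ, then C is a (d_F, 1)-perfect code. -/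
open Set Function

/-- The covering `F = {{i} : i ∈ Fin n} ∪ {{j, k}}`. -/
def F12 {n : ℕ} (j k : Fin n) : Finset (Finset (Fin n)) :=
  (Finset.univ.image fun i : Fin n => ({i} : Finset (Fin n))) ∪ {({j, k} : Finset (Fin n))}

/-- The tile `D_n(x) = {0, x} ∪ {e_i : i ∈ Fin n}`. -/
def Dnx {n : ℕ} (x : Fin n → ZMod 2) : Set (Fin n → ZMod 2) :=
  {0, x} ∪ Set.range (fun i : Fin n => unitVec i)

/-! A cover by at most one member of `F` is empty or a single member, so the `d_F`-ball of
radius 1 about `0` consists of `0` and the vectors supported in some `{i}` or in `{j, k}`; over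
`𝔽₂` these are exactly the `e_i` and `e_j + e_k`. Since `d_F(x, y) = ω_F(x + y)` and `c + c = 0`,
every ball `B(c, 1)` is the translate `c + B(0, 1)`, so a tiling by `B(0, 1)` is a perfect code. -/

theorem zmod_two_eq_zero_or_eq_one : ∀ a : ZMod 2, a = 0 ∨ a = 1 := by decide

theorem add_add_cancel_left_zmod_two {ι : Type*} (c y : ι → ZMod 2) : c + (c + y) = y :=
  funext fun _ => CharTwo.add_cancel_left _ _

section CombinatorialWeight

variable {ι : Type*} [DecidableEq ι] {F : Finset (Finset ι)}

theorem combWeight_le_card {A : Finset (Finset ι)} {x : ι → ZMod 2} (hA : A ⊆ F)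
    (hx : support x ⊆ ↑(A.sup id)) : combWeight F x ≤ A.card :=
  Nat.sInf_le ⟨A, hA, rfl, hx⟩

theorem exists_cover_card_eq_combWeight (hF : ∀ i, i ∈ F.sup id) (x : ι → ZMod 2) :
    ∃ A ⊆ F, A.card = combWeight F x ∧ support x ⊆ ↑(A.sup id) :=
  Nat.sInf_mem (s := {k | ∃ A ⊆ F, A.card = k ∧ support x ⊆ ↑(A.sup id)})
    ⟨F.card, F, subset_rfl, rfl, fun i _ => hF i⟩

theorem combWeight_zero : combWeight F 0 = 0 :=
  Nat.eq_zero_of_le_zero (combWeight_le_card (Finset.empty_subset F) (by simp))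

theorem combWeight_eq_zero_iff (hF : ∀ i, i ∈ F.sup id) {x : ι → ZMod 2} :
    combWeight F x = 0 ↔ x = 0 := by
  refine ⟨fun h => ?_, fun h => h ▸ combWeight_zero⟩
  obtain ⟨A, -, hA, hx⟩ := exists_cover_card_eq_combWeight hF x
  rw [h, Finset.card_eq_zero] at hA
  subst hA
  simpa using hx

theorem combWeight_add_le (hF : ∀ i, i ∈ F.sup id) (x y : ι → ZMod 2) :
    combWeight F (x + y) ≤ combWeight F x + combWeight F y := by
  obtain ⟨A, hAF, hA, hx⟩ := exists_cover_card_eq_combWeight hF x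
  obtain ⟨B, hBF, hB, hy⟩ := exists_cover_card_eq_combWeight hF y
  have hxy : support (x + y) ⊆ ↑((A ∪ B).sup id) := by
    rw [Finset.sup_union, Finset.sup_eq_union, Finset.coe_union]
    exact (support_add x y).trans (Set.union_subset_union hx hy)
  calc combWeight F (x + y) ≤ (A ∪ B).card :=
        combWeight_le_card (Finset.union_subset hAF hBF) hxy
    _ ≤ A.card + B.card := Finset.card_union_le A B
    _ = combWeight F x + combWeight F y := by rw [hA, hB]

theorem combWeight_mono (hF : ∀ i, i ∈ F.sup id) {x y : ι → ZMod 2}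
    (h : support x ⊆ support y) : combWeight F x ≤ combWeight F y := by
  obtain ⟨A, hAF, hA, hy⟩ := exists_cover_card_eq_combWeight hF y
  exact hA ▸ combWeight_le_card hAF (h.trans hy)

theorem isTSMetric_combWeight (hF : ∀ i, i ∈ F.sup id) :
    IsTSMetric (fun x y : ι → ZMod 2 => (combWeight F (x + y) : ℝ)) :=
  ⟨fun x => combWeight F x,
    ⟨fun _ => Nat.cast_nonneg _, fun _ => by rw [Nat.cast_eq_zero, combWeight_eq_zero_iff hF],
      fun x y => by dsimp only; exact_mod_cast combWeight_add_le hF x y⟩,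
    fun _ _ h => by dsimp only; exact_mod_cast combWeight_mono hF h, fun _ _ => rfl⟩

theorem combWeight_le_one_iff (hF : ∀ i, i ∈ F.sup id) {x : ι → ZMod 2} :
    combWeight F x ≤ 1 ↔ x = 0 ∨ ∃ s ∈ F, support x ⊆ ↑s := by
  constructor
  · intro h
    obtain ⟨A, hAF, hA, hx⟩ := exists_cover_card_eq_combWeight hF x
    rcases Nat.le_one_iff_eq_zero_or_eq_one.mp (hA ▸ h) with hA0 | hA1
    · rw [Finset.card_eq_zero] at hA0
      subst hA0
      left
      simpa using hx
    · obtain ⟨s, rfl⟩ := Finset.card_eq_one.mp hA1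
      exact Or.inr ⟨s, hAF (Finset.mem_singleton_self s), by simpa using hx⟩
  · rintro (rfl | ⟨s, hs, hx⟩)
    · simp [combWeight_zero]
    · exact combWeight_le_card (Finset.singleton_subset_iff.mpr hs) (by simpa using hx)

end CombinatorialWeight

section SmallSupport

variable {ι : Type*} [DecidableEq ι]

theorem eq_zero_or_eq_unitVec_of_support_subset {y : ι → ZMod 2} {i : ι}
    (h : support y ⊆ {i}) : y = 0 ∨ y = unitVec i := by
  have hy : y = Pi.single i (y i) := by
    funext t
    by_cases ht : t = i
    · subst ht
      simp
    · rw [Pi.single_eq_of_ne ht]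
      exact notMem_support.mp fun ht' => ht (h ht')
  rcases zmod_two_eq_zero_or_eq_one (y i) with hi | hi <;> rw [hi] at hy
  · exact Or.inl (by simpa using hy)
  · exact Or.inr hy

theorem eq_of_support_subset_pair {y : ι → ZMod 2} {j k : ι} (h : support y ⊆ {j, k}) :
    y = 0 ∨ y = unitVec j ∨ y = unitVec k ∨ y = unitVec j + unitVec k := by
  rcases zmod_two_eq_zero_or_eq_one (y j) with hj | hj
  · have hk : support y ⊆ {k} := fun t ht =>
      (h ht).resolve_left (by rintro rfl; exact ht hj)
    rcases eq_zero_or_eq_unitVec_of_support_subset hk with rfl | rfl <;> simp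
  · -- adding `e_j` clears the coordinate `j`, reducing to the singleton case
    have hk : support (y + unitVec j) ⊆ {k} := by
      intro t ht
      by_cases htj : t = j
      · subst htj
        simp [unitVec, hj, CharTwo.add_self_eq_zero] at ht
      · exact (h (by simpa [unitVec, Pi.single_eq_of_ne htj] using ht)).resolve_left htj
    have hy : y = unitVec j + (unitVec j + y) := (add_add_cancel_left_zmod_two _ y).symm
    rcases eq_zero_or_eq_unitVec_of_support_subset hk with h0 | h0 <;>
      rw [hy, add_comm _ y, h0] <;> simp

end SmallSupport

section TranslationInvariant

variable {ι : Type*} (ω : (ι → ZMod 2) → ℝ) (r : ℝ)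

theorem tsBall_eq_image_add_tsBall_zero (c : ι → ZMod 2) :
    tsBall (fun x y => ω (x + y)) c r = (c + ·) '' tsBall (fun x y => ω (x + y)) 0 r := by
  ext y
  simp only [tsBall, Set.mem_image, Set.mem_ofPred_eq, zero_add]
  exact ⟨fun h => ⟨c + y, h, add_add_cancel_left_zmod_two c y⟩,
    by rintro ⟨z, hz, rfl⟩; rwa [add_add_cancel_left_zmod_two]⟩

theorem isPerfectCode_of_isTiling {C : Set (ι → ZMod 2)}
    (h : IsTiling (tsBall (fun x y => ω (x + y)) 0 r) C) :
    IsPerfectCode (fun x y => ω (x + y)) r C := by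
  have hball := tsBall_eq_image_add_tsBall_zero ω r
  exact ⟨(Set.iUnion₂_congr fun c _ => hball c).trans h.1, fun c hc c' hc' hne => by
    show Disjoint _ _
    rw [hball c, hball c']
    exact h.2 hc hc' hne⟩

end TranslationInvariant

theorem mem_sup_F12 {n : ℕ} (j k i : Fin n) : i ∈ (F12 j k).sup id :=
  Finset.mem_sup.mpr ⟨{i}, by simp [F12], Finset.mem_singleton_self i⟩

theorem combWeight_F12_le_one_iff {n : ℕ} (j k : Fin n) (y : Fin n → ZMod 2) :
    combWeight (F12 j k) y ≤ 1 ↔ y ∈ Dnx (unitVec j + unitVec k) := by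
  rw [combWeight_le_one_iff (mem_sup_F12 j k)]
  simp only [F12, Dnx, Finset.mem_union, Finset.mem_image, Finset.mem_univ, true_and,
    Finset.mem_singleton, Set.mem_union, Set.mem_insert_iff, Set.mem_singleton_iff, Set.mem_range]
  constructor
  · rintro (rfl | ⟨s, ⟨i, rfl⟩ | rfl, hy⟩)
    · exact Or.inl (Or.inl rfl)
    · rcases eq_zero_or_eq_unitVec_of_support_subset (by simpa using hy) with rfl | rfl
      · exact Or.inl (Or.inl rfl)
      · exact Or.inr ⟨i, rfl⟩
    · rcases eq_of_support_subset_pair (by simpa using hy) with rfl | rfl | rfl | rfl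
      · exact Or.inl (Or.inl rfl)
      · exact Or.inr ⟨j, rfl⟩
      · exact Or.inr ⟨k, rfl⟩
      · exact Or.inl (Or.inr rfl)
  · rintro ((rfl | rfl) | ⟨i, rfl⟩)
    · exact Or.inl rfl
    · refine Or.inr ⟨{j, k}, Or.inr rfl, ?_⟩
      refine (support_add _ _).trans (Set.union_subset ?_ ?_) <;>
        refine Pi.support_single_subset.trans ?_ <;> simp
    · exact Or.inr ⟨{i}, Or.inl ⟨i, rfl⟩, by simp [unitVec]⟩

theorem stmt_12_general {n : ℕ} (j k : Fin n) :
    IsTSMetric (fun x y : Fin n → ZMod 2 => (combWeight (F12 j k) (x + y) : ℝ)) ∧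
    tsBall (fun x y : Fin n → ZMod 2 => (combWeight (F12 j k) (x + y) : ℝ)) 0 1 =
      Dnx (unitVec j + unitVec k) ∧
    ∀ C : Set (Fin n → ZMod 2), IsTiling (Dnx (unitVec j + unitVec k)) C →
      IsPerfectCode (fun x y : Fin n → ZMod 2 => (combWeight (F12 j k) (x + y) : ℝ)) 1 C := by
  have hball : tsBall (fun x y : Fin n → ZMod 2 => (combWeight (F12 j k) (x + y) : ℝ)) 0 1 =
      Dnx (unitVec j + unitVec k) := by
    ext y
    simp only [tsBall, Set.mem_ofPred_eq, zero_add, Nat.cast_le_one, combWeight_F12_le_one_iff]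
  exact ⟨isTSMetric_combWeight (mem_sup_F12 j k), hball, fun C hC =>
    isPerfectCode_of_isTiling (fun v => (combWeight (F12 j k) v : ℝ)) 1 (hball ▸ hC)⟩

/-- for `j ≠ k`, `x = e_j + e_k` and `F = {{i} : i} ∪ {{j,k}}`, the
combinatorial metric `d_F` is a TS-metric with `B_{d_F}(0,1) = D_n(x)`; consequently any
tiling `(D_n(x), C)` makes `C` a `(d_F, 1)`-perfect code. -/
theorem stmt_12 {n : ℕ} (j k : Fin n) (hjk : j ≠ k) :
    IsTSMetric (fun x y : Fin n → ZMod 2 => (combWeight (F12 j k) (x + y) : ℝ)) ∧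
    tsBall (fun x y : Fin n → ZMod 2 => (combWeight (F12 j k) (x + y) : ℝ)) 0 1 =
      Dnx (unitVec j + unitVec k) ∧
    ∀ C : Set (Fin n → ZMod 2), IsTiling (Dnx (unitVec j + unitVec k)) C →
      IsPerfectCode (fun x y : Fin n → ZMod 2 => (combWeight (F12 j k) (x + y) : ℝ)) 1 C :=
  stmt_12_general j k
end

section
/- Let s ≤ n and identify F₂ⁿ with the product F₂ˢ × F₂^{n-s}. Let d be a TS-metric on F₂ˢ, r > 0, and D = B_d(0,r). Then there exists a TS-metric d* on F₂ⁿ such that B_{d*}(0,r) = D × {0}, where D × {0} = {(u, 0) : u ∈ D}. -/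
open Set Function

/-- a TS-ball `D = B_d(0,r)` in `F₂ˢ` extends: identifying `F₂ⁿ` with
`F₂ˢ × F₂^{n-s}` (via functions on `Fin s ⊕ Fin (n-s)`), there is a TS-metric `d*` on
`F₂ⁿ` with `B_{d*}(0,r) = D × {0}`. -/
theorem stmt_13 {s n : ℕ} (hsn : s ≤ n)
    (d : (Fin s → ZMod 2) → (Fin s → ZMod 2) → ℝ) (hd : IsTSMetric d)
    (r : ℝ) (hr : 0 < r) :
    ∃ d' : (Fin s ⊕ Fin (n - s) → ZMod 2) → (Fin s ⊕ Fin (n - s) → ZMod 2) → ℝ,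
      IsTSMetric d' ∧
      tsBall d' 0 r = (fun u : Fin s → ZMod 2 => Sum.elim u 0) '' tsBall d 0 r := by
  obtain ⟨ω, ⟨hpos, hzero, hsub⟩, hresp, hdω⟩ := hd
  classical
  set ω' : (Fin s ⊕ Fin (n - s) → ZMod 2) → ℝ :=
    fun x => ω (fun i => x (Sum.inl i)) +
      (if (fun j => x (Sum.inr j)) = (0 : Fin (n-s) → ZMod 2) then 0 else 2 * r) with hω'
  have hind_nonneg : ∀ x : Fin s ⊕ Fin (n - s) → ZMod 2,
      (0:ℝ) ≤ (if (fun j => x (Sum.inr j)) = (0 : Fin (n-s) → ZMod 2) then 0 else 2 * r) := by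
    intro x; split <;> [rfl; positivity]
  refine ⟨fun x y => ω' (x + y), ⟨ω', ⟨?_, ?_, ?_⟩, ?_, fun _ _ => rfl⟩, ?_⟩
  · intro x
    exact add_nonneg (hpos _) (hind_nonneg x)
  · intro x
    constructor
    · intro h
      simp only [hω'] at h
      have h1 : ω (fun i => x (Sum.inl i)) = 0 ∧
          (if (fun j => x (Sum.inr j)) = (0 : Fin (n-s) → ZMod 2) then 0 else 2 * r) = 0 := by
        constructor
        · have := hind_nonneg x
          linarith [hpos (fun i => x (Sum.inl i))]
        · linarith [hpos (fun i => x (Sum.inl i)), hind_nonneg x]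
      have hl : (fun i => x (Sum.inl i)) = (0 : Fin s → ZMod 2) := (hzero _).mp h1.1
      have hr' : (fun j => x (Sum.inr j)) = (0 : Fin (n-s) → ZMod 2) := by
        by_contra hc
        rw [if_neg hc] at h1
        nlinarith [h1.2]
      funext z
      cases z with
      | inl i => exact congrFun hl i
      | inr j => exact congrFun hr' j
    · intro h
      subst h
      have h0 : (fun j => (0 : Fin s ⊕ Fin (n-s) → ZMod 2) (Sum.inr j)) = (0 : Fin (n-s) → ZMod 2) := rfl
      have hl0 : ω (fun i => (0 : Fin s ⊕ Fin (n-s) → ZMod 2) (Sum.inl i)) = 0 := (hzero _).mpr rfl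
      simp only [hω', if_pos h0, hl0, add_zero]
  · intro x y
    have h1 : ω (fun i => (x + y) (Sum.inl i)) ≤
        ω (fun i => x (Sum.inl i)) + ω (fun i => y (Sum.inl i)) := by
      have := hsub (fun i => x (Sum.inl i)) (fun i => y (Sum.inl i))
      convert this using 2
      rfl
    have h2 : (if (fun j => (x+y) (Sum.inr j)) = (0 : Fin (n-s) → ZMod 2) then (0:ℝ) else 2 * r) ≤
        (if (fun j => x (Sum.inr j)) = (0 : Fin (n-s) → ZMod 2) then 0 else 2 * r) +
        (if (fun j => y (Sum.inr j)) = (0 : Fin (n-s) → ZMod 2) then 0 else 2 * r) := by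
      by_cases hx : (fun j => x (Sum.inr j)) = (0 : Fin (n-s) → ZMod 2)
      · by_cases hy : (fun j => y (Sum.inr j)) = (0 : Fin (n-s) → ZMod 2)
        · have hz : (fun j => (x+y) (Sum.inr j)) = (0 : Fin (n-s) → ZMod 2) := by
            funext j
            have h1 := congrFun hx j; have h2 := congrFun hy j
            simp only [Pi.add_apply]
            simp only [Pi.zero_apply] at h1 h2
            rw [h1, h2, add_zero, Pi.zero_apply]
          rw [if_pos hx, if_pos hy, if_pos hz, add_zero]
        · simp only [hx, if_pos, hy, if_neg, not_false_iff]
          split <;> nlinarith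
      · simp only [hx, if_neg, not_false_iff]
        have := hind_nonneg y
        split <;> nlinarith [hind_nonneg y]
    simp only [hω']
    linarith
  · intro x y hxy
    have h1 : ω (fun i => x (Sum.inl i)) ≤ ω (fun i => y (Sum.inl i)) := by
      apply hresp
      intro i hi
      exact hxy hi
    have h2 : (if (fun j => x (Sum.inr j)) = (0 : Fin (n-s) → ZMod 2) then (0:ℝ) else 2 * r) ≤
        (if (fun j => y (Sum.inr j)) = (0 : Fin (n-s) → ZMod 2) then 0 else 2 * r) := by
      by_cases hx : (fun j => x (Sum.inr j)) = (0 : Fin (n-s) → ZMod 2)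
      · simp [hx, hind_nonneg y]
      · have hy : ¬ (fun j => y (Sum.inr j)) = (0 : Fin (n-s) → ZMod 2) := by
          intro hc
          apply hx
          funext j
          by_contra hj
          have : Sum.inr j ∈ Function.support x := hj
          have := hxy this
          exact this (congrFun hc j)
        simp [hx, hy]
    simp only [hω']
    linarith
  · ext w
    simp only [tsBall, Set.mem_setOf_eq, Set.mem_image, zero_add]
    constructor
    · intro hw
      have hwr : (fun j => w (Sum.inr j)) = (0 : Fin (n-s) → ZMod 2) := by
        by_contra hc
        simp only [hω', if_neg hc] at hw
        nlinarith [hpos (fun i => w (Sum.inl i))]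
      refine ⟨fun i => w (Sum.inl i), ?_, ?_⟩
      · simp only [hω', if_pos hwr] at hw
        rw [hdω]
        rw [zero_add]
        linarith
      · funext z
        cases z with
        | inl i => rfl
        | inr j => exact (congrFun hwr j).symm
    · rintro ⟨u, hu, rfl⟩
      rw [hdω, zero_add] at hu
      have : (fun j => Sum.elim u (0 : Fin (n-s) → ZMod 2) (Sum.inr j)) = (0 : Fin (n-s) → ZMod 2) := rfl
      simp only [hω', if_pos this]
      simpa using hu
end

section
/- Let D₁ ⊆ F₂ⁿ and D₂ ⊆ F₂ᵐ be nonempty. Then the concatenation D₁ × D₂ = {(u,v) : u ∈ D₁, v ∈ D₂} ⊆ F₂ⁿ × F₂ᵐ ≅ F₂^{n+m} is a polyhedromino if and only if both D₁ and D₂ are polyhedrominoes. -/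
open Set Function

lemma elim_comp {n m : ℕ} (w : Fin n ⊕ Fin m → ZMod 2) :
    Sum.elim (fun i => w (Sum.inl i)) (fun j => w (Sum.inr j)) = w := by
  funext x; cases x <;> rfl

lemma hd_elim {n m : ℕ} (u u' : Fin n → ZMod 2) (v v' : Fin m → ZMod 2) :
    hammingDist (Sum.elim u v) (Sum.elim u' v') = hammingDist u u' + hammingDist v v' := by
  simp only [hammingDist, Finset.card_filter, Fintype.sum_sum_type]
  simp
  congr 1 <;> exact Finset.sum_congr rfl fun _ _ => by split_ifs <;> simp_all

lemma hd_split {n m : ℕ} (w w' : Fin n ⊕ Fin m → ZMod 2) :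
    hammingDist w w' = hammingDist (fun i => w (Sum.inl i)) (fun i => w' (Sum.inl i)) +
      hammingDist (fun j => w (Sum.inr j)) (fun j => w' (Sum.inr j)) := by
  conv_lhs => rw [← elim_comp w, ← elim_comp w']
  rw [hd_elim]

lemma path_le {ι : Type*} [Fintype ι] (γ : ℕ → ι → ZMod 2) (k : ℕ)
    (h : ∀ j < k, hammingDist (γ j) (γ (j + 1)) = 1) :
    hammingDist (γ 0) (γ k) ≤ k := by
  induction k with
  | zero => simp
  | succ k ih =>
    calc hammingDist (γ 0) (γ (k + 1))
        ≤ hammingDist (γ 0) (γ k) + hammingDist (γ k) (γ (k + 1)) :=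
          hammingDist_triangle _ _ _
      _ ≤ k + 1 := by
          rw [h k (by omega)]
          exact Nat.add_le_add_right (ih fun j hj => h j (by omega)) 1

/-- for nonempty `D₁ ⊆ F₂ⁿ`, `D₂ ⊆ F₂ᵐ`, the concatenation `D₁ × D₂`
(inside `F₂^{n+m}`, as functions on `Fin n ⊕ Fin m`) is a polyhedromino iff both
`D₁` and `D₂` are polyhedrominoes. -/
theorem stmt_16 {n m : ℕ} (D₁ : Set (Fin n → ZMod 2)) (D₂ : Set (Fin m → ZMod 2))
    (h₁ : D₁.Nonempty) (h₂ : D₂.Nonempty) :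
    IsPolyhedromino
        (Set.image2 (fun (u : Fin n → ZMod 2) (v : Fin m → ZMod 2) => Sum.elim u v) D₁ D₂) ↔
      IsPolyhedromino D₁ ∧ IsPolyhedromino D₂ := by
  constructor
  · intro H
    -- common extraction machinery
    have main : ∀ x ∈ D₁, ∀ y ∈ D₁, ∀ v ∈ D₂, ∃ γ : ℕ → (Fin n → ZMod 2),
        γ 0 = x ∧ γ (hammingDist x y) = y ∧ (∀ i ≤ hammingDist x y, γ i ∈ D₁) ∧
        ∀ i < hammingDist x y, hammingDist (γ i) (γ (i + 1)) = 1 := by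
      intro x hx y hy v hv
      set d := hammingDist x y with hd
      have hD : hammingDist (Sum.elim x v) (Sum.elim y v) = d := by
        rw [hd_elim]; simp [hd]
      obtain ⟨γ, hγ0, hγd, hmem, hstep⟩ :=
        H _ (Set.mem_image2_of_mem hx hv) _ (Set.mem_image2_of_mem hy hv)
      rw [hD] at hγd hmem hstep
      -- second component is constant v along the path
      have key : ∀ i ≤ d, (fun j => γ i (Sum.inr j)) = v := by
        intro i hi
        have A : hammingDist (γ 0) (γ i) ≤ i := path_le γ i fun j hj => hstep j (by omega)
        have B : hammingDist (γ i) (γ d) ≤ d - i := by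
          have := path_le (fun j => γ (i + j)) (d - i)
            (fun j hj => by simpa [Nat.add_assoc] using hstep (i + j) (by omega))
          simpa [show i + (d - i) = d by omega] using this
        rw [hγ0] at A
        rw [hγd] at B
        rw [← elim_comp (γ i)] at A B
        rw [hd_elim] at A B
        have tri := hammingDist_triangle x (fun i_1 => γ i (Sum.inl i_1)) y
        have hsym : hammingDist (fun i_1 => γ i (Sum.inr i_1)) v =
            hammingDist v (fun i_1 => γ i (Sum.inr i_1)) := hammingDist_comm _ _
        have hz : hammingDist v (fun i_1 => γ i (Sum.inr i_1)) = 0 := by omega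
        have := hammingDist_eq_zero.mp hz
        funext j
        exact congrFun this.symm j
      refine ⟨fun i j => γ i (Sum.inl j), ?_, ?_, ?_, ?_⟩
      · funext j; show γ 0 (Sum.inl j) = x j; rw [hγ0]; rfl
      · funext j; show γ d (Sum.inl j) = y j; rw [hγd]; rfl
      · intro i hi
        obtain ⟨u, hu, w, hw, heq⟩ := hmem i hi
        show (fun j => γ i (Sum.inl j)) ∈ D₁
        have hh : (fun j => γ i (Sum.inl j)) = u := by
          funext j; rw [← heq]; rfl
        rw [hh]; exact hu
      · intro i hi
        show hammingDist (fun j => γ i (Sum.inl j)) (fun j => γ (i + 1) (Sum.inl j)) = 1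
        have hs := hstep i hi
        rw [hd_split] at hs
        rw [key i (by omega), key (i + 1) (by omega)] at hs
        simpa using hs
    obtain ⟨v, hv⟩ := h₂
    obtain ⟨u, hu⟩ := h₁
    constructor
    · intro x hx y hy; exact main x hx y hy v hv
    · -- symmetric argument for D₂
      intro x hx y hy
      set d := hammingDist x y with hd
      have hD : hammingDist (Sum.elim u x) (Sum.elim u y) = d := by
        rw [hd_elim]; simp [hd]
      obtain ⟨γ, hγ0, hγd, hmem, hstep⟩ :=
        H _ (Set.mem_image2_of_mem hu hx) _ (Set.mem_image2_of_mem hu hy)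
      rw [hD] at hγd hmem hstep
      have key : ∀ i ≤ d, (fun j => γ i (Sum.inl j)) = u := by
        intro i hi
        have A : hammingDist (γ 0) (γ i) ≤ i := path_le γ i fun j hj => hstep j (by omega)
        have B : hammingDist (γ i) (γ d) ≤ d - i := by
          have := path_le (fun j => γ (i + j)) (d - i)
            (fun j hj => by simpa [Nat.add_assoc] using hstep (i + j) (by omega))
          simpa [show i + (d - i) = d by omega] using this
        rw [hγ0] at A
        rw [hγd] at B
        rw [← elim_comp (γ i)] at A B
        rw [hd_elim] at A B
        have tri := hammingDist_triangle x (fun i_1 => γ i (Sum.inr i_1)) y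
        have hsym : hammingDist (fun i_1 => γ i (Sum.inl i_1)) u =
            hammingDist u (fun i_1 => γ i (Sum.inl i_1)) := hammingDist_comm _ _
        have hz : hammingDist u (fun i_1 => γ i (Sum.inl i_1)) = 0 := by omega
        have := hammingDist_eq_zero.mp hz
        funext j
        exact congrFun this.symm j
      refine ⟨fun i j => γ i (Sum.inr j), ?_, ?_, ?_, ?_⟩
      · funext j; show γ 0 (Sum.inr j) = x j; rw [hγ0]; rfl
      · funext j; show γ d (Sum.inr j) = y j; rw [hγd]; rfl
      · intro i hi
        obtain ⟨a, ha, w, hw, heq⟩ := hmem i hi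
        show (fun j => γ i (Sum.inr j)) ∈ D₂
        have hh : (fun j => γ i (Sum.inr j)) = w := by
          funext j; rw [← heq]; rfl
        rw [hh]; exact hw
      · intro i hi
        show hammingDist (fun j => γ i (Sum.inr j)) (fun j => γ (i + 1) (Sum.inr j)) = 1
        have hs := hstep i hi
        rw [hd_split] at hs
        rw [key i (by omega), key (i + 1) (by omega)] at hs
        simpa using hs
  · rintro ⟨P₁, P₂⟩ z hz w hw
    obtain ⟨x, hx, v, hv, rfl⟩ := hz
    obtain ⟨y, hy, v', hv', rfl⟩ := hw
    obtain ⟨γ₁, g10, g1d, g1mem, g1step⟩ := P₁ x hx y hy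
    obtain ⟨γ₂, g20, g2d, g2mem, g2step⟩ := P₂ v hv v' hv'
    set d₁ := hammingDist x y with hd1
    set d₂ := hammingDist v v' with hd2
    have hD : hammingDist (Sum.elim x v) (Sum.elim y v') = d₁ + d₂ := hd_elim x y v v'
    refine ⟨fun i => if i ≤ d₁ then Sum.elim (γ₁ i) v else Sum.elim (γ₁ d₁) (γ₂ (i - d₁)),
      ?_, ?_, ?_, ?_⟩
    · simp [g10]
    · rw [hD]
      beta_reduce
      by_cases hc : d₂ = 0
      · have hv'' : v = v' := hammingDist_eq_zero.mp hc
        simp [hc, g1d, hv'']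
      · rw [if_neg (by omega)]
        simp [g1d, show d₁ + d₂ - d₁ = d₂ by omega, g2d]
    · intro i hi
      rw [hD] at hi
      beta_reduce
      by_cases hc : i ≤ d₁
      · rw [if_pos hc]
        exact Set.mem_image2_of_mem (g1mem i hc) hv
      · rw [if_neg hc]
        exact Set.mem_image2_of_mem (g1mem d₁ le_rfl) (g2mem (i - d₁) (by omega))
    · intro i hi
      rw [hD] at hi
      beta_reduce
      by_cases hc : i + 1 ≤ d₁
      · rw [if_pos (by omega), if_pos hc, hd_elim]
        simp [g1step i (by omega)]
      · by_cases hc2 : i ≤ d₁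
        · -- i = d₁
          have hieq : i = d₁ := by omega
          rw [if_pos hc2, if_neg (by omega), hd_elim, hieq]
          simp [show d₁ + 1 - d₁ = 1 by omega, ← g20,
            g2step 0 (by omega)]
        · rw [if_neg hc2, if_neg (by omega), hd_elim,
            show i + 1 - d₁ = (i - d₁) + 1 by omega]
          simp [g2step (i - d₁) (by omega)]
end

section
/- Let D₁, C₁ ⊆ F₂ⁿ and D₂, C₂ ⊆ F₂ᵐ. Then (D₁ × D₂, C₁ × C₂) is a poly-tiling of F₂ⁿ × F₂ᵐ ≅ F₂^{n+m} if and only if (D₁, C₁) is a poly-tiling of F₂ⁿ and (D₂, C₂) is a poly-tiling of F₂ᵐ. -/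
open Set Function

/-!
A tiling `(D, C)` is the same as a unique decomposition `x = c + d` with `c ∈ C`, `d ∈ D` for
every `x`, and the decompositions of a concatenated vector are exactly the pairs of
decompositions of its two halves. A set is a polyhedromino iff between any two of its points one
can take a single Hamming step inside it that shortens the distance to the target; since the
Hamming distance on the concatenation is the sum of the distances of the halves, such steps in
`D₁ × D₂` are exactly such steps in one factor with the other half kept fixed.
-/

variable {α β ι M : Type*}

theorem mem_image2_sumElim {s : Set (α → M)} {t : Set (β → M)} {w : α ⊕ β → M} :
    w ∈ image2 Sum.elim s t ↔ w ∘ Sum.inl ∈ s ∧ w ∘ Sum.inr ∈ t := by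
  constructor
  · rintro ⟨u, hu, v, hv, rfl⟩
    exact ⟨hu, hv⟩
  · rintro ⟨hu, hv⟩
    exact ⟨_, hu, _, hv, Sum.elim_comp_inl_inr w⟩

theorem existsUnique_sumElim_iff {p : (α → M) → Prop} {q : (β → M) → Prop} :
    (∃! w : α ⊕ β → M, p (w ∘ Sum.inl) ∧ q (w ∘ Sum.inr)) ↔ (∃! u, p u) ∧ ∃! v, q v := by
  refine ((Equiv.sumArrowEquivProdArrow α β M).existsUnique_congr_right
    (q := fun w => p w.1 ∧ q w.2)).trans ⟨?_, ?_⟩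
  · rintro ⟨⟨u, v⟩, ⟨hu, hv⟩, huniq⟩
    exact ⟨⟨u, hu, fun u' hu' => congrArg Prod.fst (huniq (u', v) ⟨hu', hv⟩)⟩,
      ⟨v, hv, fun v' hv' => congrArg Prod.snd (huniq (u, v') ⟨hu, hv'⟩)⟩⟩
  · rintro ⟨⟨u, hu, huniq⟩, ⟨v, hv, hvuniq⟩⟩
    exact ⟨(u, v), ⟨hu, hv⟩, fun w ⟨hw₁, hw₂⟩ => Prod.ext (huniq _ hw₁) (hvuniq _ hw₂)⟩

theorem isTiling_iff_existsUnique {D C : Set (ι → ZMod 2)} :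
    IsTiling D C ↔ ∀ x, ∃! c, c ∈ C ∧ x - c ∈ D := by
  have mem_translate : ∀ c x, x ∈ (c + ·) '' D ↔ x - c ∈ D := fun c x => by
    simp [image_add_left, neg_add_eq_sub]
  change (⋃ c ∈ C, _) = univ ∧ C.PairwiseDisjoint (fun c => (c + ·) '' D) ↔ _
  simp only [eq_univ_iff_forall, mem_iUnion₂, mem_translate, exists_prop, pairwiseDisjoint_iff,
    Set.Nonempty, mem_inter_iff]
  constructor
  · rintro ⟨hcov, hdisj⟩ x
    obtain ⟨c, hc, hxc⟩ := hcov x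
    exact ⟨c, ⟨hc, hxc⟩, fun c' ⟨hc', hxc'⟩ => hdisj hc' hc ⟨x, hxc', hxc⟩⟩
  · intro h
    exact ⟨fun x => (h x).exists,
      fun c hc c' hc' ⟨x, hxc, hxc'⟩ => (h x).unique ⟨hc, hxc⟩ ⟨hc', hxc'⟩⟩

theorem IsTiling.nonempty_tile {D C : Set (ι → ZMod 2)} (h : IsTiling D C) : D.Nonempty := by
  obtain ⟨c, ⟨-, hc⟩, -⟩ := isTiling_iff_existsUnique.1 h 0
  exact ⟨_, hc⟩

theorem isTiling_image2_sumElim_iff {D₁ C₁ : Set (α → ZMod 2)} {D₂ C₂ : Set (β → ZMod 2)} :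
    IsTiling (image2 Sum.elim D₁ D₂) (image2 Sum.elim C₁ C₂) ↔
      IsTiling D₁ C₁ ∧ IsTiling D₂ C₂ := by
  have split (x : α ⊕ β → ZMod 2) :
      (∃! c, c ∈ image2 Sum.elim C₁ C₂ ∧ x - c ∈ image2 Sum.elim D₁ D₂) ↔
        (∃! c₁, c₁ ∈ C₁ ∧ x ∘ Sum.inl - c₁ ∈ D₁) ∧ ∃! c₂, c₂ ∈ C₂ ∧ x ∘ Sum.inr - c₂ ∈ D₂ := by
    simp only [mem_image2_sumElim, Pi.sub_comp, and_and_and_comm]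
    exact existsUnique_sumElim_iff (p := fun c₁ => c₁ ∈ C₁ ∧ x ∘ Sum.inl - c₁ ∈ D₁)
      (q := fun c₂ => c₂ ∈ C₂ ∧ x ∘ Sum.inr - c₂ ∈ D₂)
  simp only [isTiling_iff_existsUnique, split]
  constructor
  · intro h
    exact ⟨fun x => by simpa using (h (Sum.elim x 0)).1,
      fun y => by simpa using (h (Sum.elim 0 y)).2⟩
  · rintro ⟨h₁, h₂⟩ x
    exact ⟨h₁ _, h₂ _⟩

section Polyhedromino

variable [Fintype α] [Fintype β] [Fintype ι] [DecidableEq M]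

theorem hammingDist_sumElim (a a' : α → M) (b b' : β → M) :
    hammingDist (Sum.elim a b) (Sum.elim a' b') = hammingDist a a' + hammingDist b b' := by
  unfold hammingDist
  rw [Finset.card_filter, Finset.card_filter, Finset.card_filter, Fintype.sum_sum_type]
  rfl

theorem hammingDist_le_sub_of_hammingDist_succ_le_one (f : ℕ → ι → M) {m n : ℕ} (hmn : m ≤ n)
    (h : ∀ i, m ≤ i → i < n → hammingDist (f i) (f (i + 1)) ≤ 1) :
    hammingDist (f m) (f n) ≤ n - m := by
  induction n, hmn using Nat.le_induction with
  | base => simp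
  | succ n hmn ih =>
    calc hammingDist (f m) (f (n + 1))
        ≤ hammingDist (f m) (f n) + hammingDist (f n) (f (n + 1)) := hammingDist_triangle _ _ _
      _ ≤ (n - m) + 1 := add_le_add (ih fun i hi hin => h i hi (by omega)) (h n hmn (by omega))
      _ = n + 1 - m := by omega

theorem isPolyhedromino_iff_exists_step {D : Set (ι → ZMod 2)} :
    IsPolyhedromino D ↔ ∀ x ∈ D, ∀ y ∈ D, x ≠ y →
      ∃ z ∈ D, hammingDist x z = 1 ∧ hammingDist z y + 1 = hammingDist x y := by
  constructor
  · intro hD x hx y hy hxy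
    obtain ⟨γ, rfl, hγy, hγD, hγstep⟩ := hD _ hx y hy
    have ht : 0 < hammingDist (γ 0) y := hammingDist_pos.2 hxy
    have hfirst : hammingDist (γ 0) (γ 1) = 1 := hγstep 0 ht
    have hfar := hammingDist_triangle (γ 0) (γ 1) y
    have hnear := hammingDist_le_sub_of_hammingDist_succ_le_one (m := 1) γ ht
      fun i _ hi => (hγstep i hi).le
    rw [hγy] at hnear
    exact ⟨γ 1, hγD 1 ht, hfirst, by omega⟩
  · intro hstep x hx y hy
    induction hxy : hammingDist x y using Nat.strong_induction_on generalizing x with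
    | _ t ih =>
      obtain rfl | hne := eq_or_ne x y
      · subst hxy
        exact ⟨fun _ => x, rfl, rfl, fun _ _ => hx, by simp⟩
      obtain ⟨z, hz, hxz, hzy⟩ := hstep x hx y hy hne
      obtain ⟨γ, hγz, hγy, hγD, hγstep⟩ := ih _ (by omega) z hz rfl
      subst hxy hγz
      rw [← hzy]
      refine ⟨fun | 0 => x | i + 1 => γ i, rfl, hγy, ?_, ?_⟩
      · rintro (_ | i) hi
        exacts [hx, hγD i (by omega)]
      · rintro (_ | i) hi
        exacts [hxz, hγstep i (by omega)]

theorem IsPolyhedromino.image2_sumElim {D₁ : Set (α → ZMod 2)} {D₂ : Set (β → ZMod 2)}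
    (h₁ : IsPolyhedromino D₁) (h₂ : IsPolyhedromino D₂) :
    IsPolyhedromino (image2 Sum.elim D₁ D₂) := by
  rw [isPolyhedromino_iff_exists_step] at *
  rintro _ ⟨u, hu, v, hv, rfl⟩ _ ⟨u', hu', v', hv', rfl⟩ hne
  by_cases huu' : u = u'
  · subst huu'
    obtain ⟨z, hz, hvz, hzv'⟩ := h₂ v hv v' hv' fun h => hne (h ▸ rfl)
    refine ⟨Sum.elim u z, mem_image2_of_mem hu hz, ?_, ?_⟩ <;>
      simp only [hammingDist_sumElim, hammingDist_self] <;> omega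
  · obtain ⟨z, hz, huz, hzu'⟩ := h₁ u hu u' hu' huu'
    refine ⟨Sum.elim z v, mem_image2_of_mem hz hv, ?_, ?_⟩ <;>
      simp only [hammingDist_sumElim, hammingDist_self] <;> omega

theorem IsPolyhedromino.of_image2_sumElim_left {D₁ : Set (α → ZMod 2)} {D₂ : Set (β → ZMod 2)}
    (h : IsPolyhedromino (image2 Sum.elim D₁ D₂)) (hD₂ : D₂.Nonempty) : IsPolyhedromino D₁ := by
  obtain ⟨v, hv⟩ := hD₂
  rw [isPolyhedromino_iff_exists_step] at *
  intro u hu u' hu' hne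
  obtain ⟨_, ⟨z, hz, w, -, rfl⟩, hstep, hcloser⟩ :=
    h _ (mem_image2_of_mem hu hv) _ (mem_image2_of_mem hu' hv)
      fun h => hne (by simpa using congrArg (· ∘ Sum.inl) h)
  simp only [hammingDist_sumElim, hammingDist_self] at hstep hcloser
  have := hammingDist_triangle u z u'
  exact ⟨z, hz, by omega, by omega⟩

theorem IsPolyhedromino.of_image2_sumElim_right {D₁ : Set (α → ZMod 2)} {D₂ : Set (β → ZMod 2)}
    (h : IsPolyhedromino (image2 Sum.elim D₁ D₂)) (hD₁ : D₁.Nonempty) : IsPolyhedromino D₂ := by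
  obtain ⟨u, hu⟩ := hD₁
  rw [isPolyhedromino_iff_exists_step] at *
  intro v hv v' hv' hne
  obtain ⟨_, ⟨w, -, z, hz, rfl⟩, hstep, hcloser⟩ :=
    h _ (mem_image2_of_mem hu hv) _ (mem_image2_of_mem hu hv')
      fun h => hne (by simpa using congrArg (· ∘ Sum.inr) h)
  simp only [hammingDist_sumElim, hammingDist_self] at hstep hcloser
  have := hammingDist_triangle v z v'
  exact ⟨z, hz, by omega, by omega⟩

end Polyhedromino

/-- `(D₁ × D₂, C₁ × C₂)` is a poly-tiling of `F₂^{n+m}` (as functions on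
`Fin n ⊕ Fin m`) iff `(D₁, C₁)` and `(D₂, C₂)` are poly-tilings of `F₂ⁿ` and `F₂ᵐ`. -/
theorem stmt_17 {n m : ℕ} (D₁ C₁ : Set (Fin n → ZMod 2)) (D₂ C₂ : Set (Fin m → ZMod 2)) :
    IsPolyTiling
        (Set.image2 (fun (u : Fin n → ZMod 2) (v : Fin m → ZMod 2) => Sum.elim u v) D₁ D₂)
        (Set.image2 (fun (u : Fin n → ZMod 2) (v : Fin m → ZMod 2) => Sum.elim u v) C₁ C₂) ↔
      IsPolyTiling D₁ C₁ ∧ IsPolyTiling D₂ C₂ := by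
  constructor
  · rintro ⟨hT, hP⟩
    obtain ⟨hT₁, hT₂⟩ := isTiling_image2_sumElim_iff.1 hT
    exact ⟨⟨hT₁, hP.of_image2_sumElim_left hT₂.nonempty_tile⟩,
      ⟨hT₂, hP.of_image2_sumElim_right hT₁.nonempty_tile⟩⟩
  · rintro ⟨⟨hT₁, hP₁⟩, hT₂, hP₂⟩
    exact ⟨isTiling_image2_sumElim_iff.2 ⟨hT₁, hT₂⟩, hP₁.image2_sumElim hP₂⟩
end

section
/- Let C₁ ⊆ F₂ⁿ be a (d₁, r)-perfect code and C₂ ⊆ F₂ᵐ a (d₂, s)-perfect code, where d₁ and d₂ are TS-metrics and r, s > 0. Then there exist a TS-metric d on F₂ⁿ × F₂ᵐ ≅ F₂^{n+m} and a radius t > 0 such that C₁ × C₂ is a (d, t)-perfect code. -/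
open Set Function

/-! Rescaling `d₁` by `1 / r` and `d₂` by `1 / s` makes both radii equal to `1`. The maximum of the
rescaled metrics on the two halves of a vector is again a TS-metric (its weight is the maximum of
the two rescaled weights), and its unit ball around `Sum.elim u v` is the product of the two balls,
so the products of the balls of `C₁` and `C₂` tile the concatenated space. -/

section Weight

variable {ι κ : Type*}

theorem IsWeight.div_const {ω : (ι → ZMod 2) → ℝ} (hω : IsWeight ω) {r : ℝ} (hr : 0 < r) :
    IsWeight fun x => ω x / r := by
  obtain ⟨hnonneg, hzero, hadd⟩ := hω
  refine ⟨fun x => div_nonneg (hnonneg x) hr.le, fun x => ?_, fun x y => ?_⟩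
  · rw [div_eq_zero_iff, hzero, or_iff_left hr.ne']
  · rw [← add_div]
    exact div_le_div_of_nonneg_right (hadd x y) hr.le

theorem RespectsSupport.div_const {ω : (ι → ZMod 2) → ℝ} (hω : RespectsSupport ω) {r : ℝ}
    (hr : 0 ≤ r) : RespectsSupport fun x => ω x / r :=
  fun x y hxy => div_le_div_of_nonneg_right (hω x y hxy) hr

theorem IsTSMetric.div_const {d : (ι → ZMod 2) → (ι → ZMod 2) → ℝ} (hd : IsTSMetric d) {r : ℝ}
    (hr : 0 < r) : IsTSMetric fun x y => d x y / r := by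
  obtain ⟨ω, hω, hsupp, hdω⟩ := hd
  exact ⟨fun x => ω x / r, hω.div_const hr, hsupp.div_const hr.le,
    fun x y => congrArg (· / r) (hdω x y)⟩

theorem eq_zero_iff_comp_inl_eq_zero_and_comp_inr_eq_zero {M : Type*} [Zero M]
    (x : ι ⊕ κ → M) :
    x = 0 ↔ x ∘ Sum.inl = 0 ∧ x ∘ Sum.inr = 0 := by
  simp only [funext_iff, Sum.forall, comp_apply, Pi.zero_apply]

theorem IsWeight.max_comp_inl_inr {ω₁ : (ι → ZMod 2) → ℝ} {ω₂ : (κ → ZMod 2) → ℝ}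
    (h₁ : IsWeight ω₁) (h₂ : IsWeight ω₂) :
    IsWeight fun x : ι ⊕ κ → ZMod 2 => max (ω₁ (x ∘ Sum.inl)) (ω₂ (x ∘ Sum.inr)) := by
  obtain ⟨hnonneg₁, hzero₁, hadd₁⟩ := h₁
  obtain ⟨hnonneg₂, hzero₂, hadd₂⟩ := h₂
  refine ⟨fun x => le_max_of_le_left (hnonneg₁ _), fun x => ?_, fun x y => ?_⟩
  · rw [eq_zero_iff_comp_inl_eq_zero_and_comp_inr_eq_zero, ← hzero₁, ← hzero₂,
      ← (hnonneg₁ _).ge_iff_eq', ← (hnonneg₂ _).ge_iff_eq', ← max_le_iff,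
      (le_max_of_le_left (hnonneg₁ _)).ge_iff_eq']
  · exact (max_le_max (hadd₁ _ _) (hadd₂ _ _)).trans (max_add_add_le_max_add_max)

theorem RespectsSupport.max_comp_inl_inr {ω₁ : (ι → ZMod 2) → ℝ} {ω₂ : (κ → ZMod 2) → ℝ}
    (h₁ : RespectsSupport ω₁) (h₂ : RespectsSupport ω₂) :
    RespectsSupport fun x : ι ⊕ κ → ZMod 2 => max (ω₁ (x ∘ Sum.inl)) (ω₂ (x ∘ Sum.inr)) :=
  fun _ _ hxy => max_le_max (h₁ _ _ fun _ hi => hxy hi) (h₂ _ _ fun _ hj => hxy hj)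

end Weight

section PerfectCode

variable {ι : Type*}

theorem tsBall_div_const (d : (ι → ZMod 2) → (ι → ZMod 2) → ℝ) (c : ι → ZMod 2) {r : ℝ}
    (hr : 0 < r) : tsBall (fun x y => d x y / r) c 1 = tsBall d c r := by
  ext y
  exact div_le_one hr

theorem IsPerfectCode.div_const {d : (ι → ZMod 2) → (ι → ZMod 2) → ℝ} {r : ℝ}
    {C : Set (ι → ZMod 2)} (h : IsPerfectCode d r C) (hr : 0 < r) :
    IsPerfectCode (fun x y => d x y / r) 1 C := by
  simpa only [IsPerfectCode, tsBall_div_const _ _ hr] using h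

end PerfectCode

section Concatenation

variable {n m : ℕ} {d₁ : (Fin n → ZMod 2) → (Fin n → ZMod 2) → ℝ}
  {d₂ : (Fin m → ZMod 2) → (Fin m → ZMod 2) → ℝ}

theorem IsTSMetric.dmax (h₁ : IsTSMetric d₁) (h₂ : IsTSMetric d₂) : IsTSMetric (dmax d₁ d₂) := by
  obtain ⟨ω₁, hω₁, hsupp₁, hdω₁⟩ := h₁
  obtain ⟨ω₂, hω₂, hsupp₂, hdω₂⟩ := h₂
  exact ⟨_, hω₁.max_comp_inl_inr hω₂, hsupp₁.max_comp_inl_inr hsupp₂,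
    fun x y => by simp only [_root_.dmax, hdω₁, hdω₂]; rfl⟩

theorem mem_tsBall_dmax_sumElim {u : Fin n → ZMod 2} {v : Fin m → ZMod 2}
    {w : Fin n ⊕ Fin m → ZMod 2} {t : ℝ} :
    w ∈ tsBall (dmax d₁ d₂) (Sum.elim u v) t ↔
      w ∘ Sum.inl ∈ tsBall d₁ u t ∧ w ∘ Sum.inr ∈ tsBall d₂ v t :=
  max_le_iff (a := d₁ u (w ∘ Sum.inl))

theorem IsPerfectCode.image2_sumElim {t : ℝ} {C₁ : Set (Fin n → ZMod 2)}
    {C₂ : Set (Fin m → ZMod 2)} (h₁ : IsPerfectCode d₁ t C₁) (h₂ : IsPerfectCode d₂ t C₂) :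
    IsPerfectCode (dmax d₁ d₂) t (image2 Sum.elim C₁ C₂) := by
  refine ⟨eq_univ_of_forall fun w => ?_, ?_⟩
  · obtain ⟨c₁, hc₁, hw₁⟩ := mem_iUnion₂.mp (h₁.1 ▸ mem_univ (w ∘ Sum.inl))
    obtain ⟨c₂, hc₂, hw₂⟩ := mem_iUnion₂.mp (h₂.1 ▸ mem_univ (w ∘ Sum.inr))
    exact mem_iUnion₂.mpr ⟨_, mem_image2_of_mem hc₁ hc₂, mem_tsBall_dmax_sumElim.mpr ⟨hw₁, hw₂⟩⟩
  · rintro _ ⟨u, hu, v, hv, rfl⟩ _ ⟨u', hu', v', hv', rfl⟩ hne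
    refine disjoint_left.mpr fun w hw hw' => ?_
    rw [mem_tsBall_dmax_sumElim] at hw hw'
    obtain hne | hne : u ≠ u' ∨ v ≠ v' := by
      by_contra! h
      exact hne (by rw [h.1, h.2])
    · exact disjoint_left.mp (h₁.2 hu hu' hne) hw.1 hw'.1
    · exact disjoint_left.mp (h₂.2 hv hv' hne) hw.2 hw'.2

end Concatenation

/-- if `C₁` is a `(d₁, r)`-perfect code and `C₂` is a `(d₂, s)`-perfect code
for TS-metrics `d₁, d₂` and radii `r, s > 0`, then there are a TS-metric `d` on
`F₂^{n+m}` (as functions on `Fin n ⊕ Fin m`) and a radius `t > 0` making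
`C₁ × C₂` a `(d, t)`-perfect code. -/
theorem stmt_19 {n m : ℕ} (d₁ : (Fin n → ZMod 2) → (Fin n → ZMod 2) → ℝ)
    (d₂ : (Fin m → ZMod 2) → (Fin m → ZMod 2) → ℝ) (r s : ℝ)
    (C₁ : Set (Fin n → ZMod 2)) (C₂ : Set (Fin m → ZMod 2))
    (hd₁ : IsTSMetric d₁) (hd₂ : IsTSMetric d₂) (hr : 0 < r) (hs : 0 < s)
    (h₁ : IsPerfectCode d₁ r C₁) (h₂ : IsPerfectCode d₂ s C₂) :
    ∃ (d : (Fin n ⊕ Fin m → ZMod 2) → (Fin n ⊕ Fin m → ZMod 2) → ℝ) (t : ℝ),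
      IsTSMetric d ∧ 0 < t ∧
      IsPerfectCode d t
        (Set.image2 (fun (u : Fin n → ZMod 2) (v : Fin m → ZMod 2) => Sum.elim u v) C₁ C₂) :=
  ⟨dmax (fun x y => d₁ x y / r) (fun x y => d₂ x y / s), 1,
    (hd₁.div_const hr).dmax (hd₂.div_const hs), one_pos,
    (h₁.div_const hr).image2_sumElim (h₂.div_const hs)⟩
end
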